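/- For a Gaussian density f(·, θ, v) with v > 0 and any nonnegative integer ℓ, the integral ∫_ℝ [∂^ℓ f/∂θ^ℓ (x, θ, v)]² / f(x, θ, v) dx is finite. -/

import Mathlib

/-!
Differentiating `p(x - θ) f(x, θ, v)` in `θ` gives `q(x - θ) f(x, θ, v)` with
`q = X p / v - p'`, so `∂^ℓ f/∂θ^ℓ = p_ℓ(x - θ) f` for a polynomial `p_ℓ`. The integrand is then
`p_ℓ(x - θ)² f(x, θ, v)`, a polynomial times a Gaussian, which is integrable.
-/

open MeasureTheory

/-- The one-dimensional Gaussian density. -/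
noncomputable def gaussf (x θ v : ℝ) : ℝ :=
  (Real.sqrt (2 * Real.pi * v))⁻¹ * Real.exp (-(x - θ) ^ 2 / (2 * v))

open Polynomial

theorem integrable_pow_mul_exp_neg_mul_sq {b : ℝ} (hb : 0 < b) (n : ℕ) :
    Integrable fun x : ℝ => x ^ n * Real.exp (-b * x ^ 2) := by
  simpa only [Real.rpow_natCast] using
    integrable_rpow_mul_exp_neg_mul_sq hb (s := n) (by linarith [n.cast_nonneg (α := ℝ)])

theorem integrable_eval_mul_exp_neg_mul_sq {b : ℝ} (hb : 0 < b) (q : ℝ[X]) :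
    Integrable fun x : ℝ => q.eval x * Real.exp (-b * x ^ 2) := by
  simp_rw [eval_eq_sum_range, Finset.sum_mul, mul_assoc]
  exact integrable_finsetSum _ fun i _ => (integrable_pow_mul_exp_neg_mul_sq hb i).const_mul _

theorem gaussf_eq_mul_exp_neg_mul_sq (x θ v : ℝ) :
    gaussf x θ v = (Real.sqrt (2 * Real.pi * v))⁻¹ * Real.exp (-(2 * v)⁻¹ * (x - θ) ^ 2) := by
  rw [gaussf]; ring_nf

theorem integrable_eval_sub_mul_gaussf {v : ℝ} (hv : 0 < v) (q : ℝ[X]) (θ : ℝ) :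
    Integrable fun x : ℝ => q.eval (x - θ) * gaussf x θ v := by
  simp_rw [gaussf_eq_mul_exp_neg_mul_sq, mul_left_comm (q.eval _)]
  exact ((integrable_eval_mul_exp_neg_mul_sq (by positivity) q).comp_sub_right θ).const_mul _

theorem hasDerivAt_gaussf_param (x θ v : ℝ) :
    HasDerivAt (fun θ' => gaussf x θ' v) ((x - θ) / v * gaussf x θ v) θ := by
  have hexponent : HasDerivAt (fun θ' => -(x - θ') ^ 2 / (2 * v)) ((x - θ) / v) θ := by
    refine ((((hasDerivAt_id θ).const_sub x).pow 2).neg.div_const (2 * v)).congr_deriv ?_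
    simp only [id, Nat.cast_ofNat]
    ring
  refine (hexponent.exp.const_mul (Real.sqrt (2 * Real.pi * v))⁻¹).congr_deriv ?_
  rw [gaussf]
  ring

theorem exists_iteratedDeriv_gaussf_param_eq (v : ℝ) (ℓ : ℕ) :
    ∃ p : ℝ[X], ∀ x θ : ℝ,
      iteratedDeriv ℓ (fun θ' => gaussf x θ' v) θ = p.eval (x - θ) * gaussf x θ v := by
  induction ℓ with
  | zero => exact ⟨1, by simp⟩
  | succ n ih =>
    obtain ⟨p, hp⟩ := ih
    refine ⟨C v⁻¹ * X * p - derivative p, fun x θ => ?_⟩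
    have hpoly : HasDerivAt (fun θ' => p.eval (x - θ')) (-(derivative p).eval (x - θ)) θ :=
      (p.hasDerivAt (x - θ)).comp_const_sub x θ
    rw [iteratedDeriv_succ, funext (hp x)]
    refine (hpoly.mul (hasDerivAt_gaussf_param x θ v)).deriv.trans ?_
    simp only [eval_sub, eval_mul, eval_C, eval_X]
    ring

/-- For a Gaussian density `f(·, θ, v)` with `v > 0` and any `ℓ ≥ 0`, the integral
`∫ [∂^ℓ f/∂θ^ℓ (x, θ, v)]² / f(x, θ, v) dx` is finite. -/
theorem gaussian_deriv_sq_div_integrable (θ v : ℝ) (hv : 0 < v) (ℓ : ℕ) :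
    Integrable (fun x : ℝ =>
      (iteratedDeriv ℓ (fun θ' => gaussf x θ' v) θ) ^ 2 / gaussf x θ v) := by
  obtain ⟨p, hp⟩ := exists_iteratedDeriv_gaussf_param_eq v ℓ
  convert integrable_eval_sub_mul_gaussf hv (p ^ 2) θ using 2 with x
  rw [hp, mul_pow, sq (gaussf x θ v), mul_div_assoc, mul_self_div_self, eval_pow]
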